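/- In the convergence theorem for Tikhonov regularization on compact sets, if the x*-minimum norm solution x† is unique, then the full family of regularized solutions x^δ_{m(δ),α(δ)} converges strongly to x† as δ → 0 (under the same parameter choice rules). -/

import Mathlib

/-!
The approximations `xapx δ ∈ Xm (mft δ)` are admissible competitors in the Tikhonov functional,
and differentiability of `F` at `x†` makes their residual `O(‖xapx δ - x†‖)`. Comparing with them,
the regularized solutions `xₖ` have residuals tending to zero and
`limsup ‖xₖ - x*‖² ≤ ‖x† - x*‖²`. A bounded sequence in a Hilbert space has a weakly convergent
subsequence; weak closedness of `F` and `C` and weak lower semicontinuity of the norm make its limit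
an `x*`-minimum norm solution, hence `x†`, and the norm bound upgrades weak to strong convergence.
As every subsequence has a further subsequence converging to the same `x†`, the whole sequence
converges.
-/

open Filter Topology

/-- Weak convergence of a sequence in a real inner product space. -/
def WeaklyConv {H : Type*} [NormedAddCommGroup H] [InnerProductSpace ℝ H]
    (x : ℕ → H) (l : H) : Prop :=
  ∀ z : H, Tendsto (fun n => (inner ℝ (x n) z : ℝ)) atTop (nhds (inner ℝ l z))

/-- A set is weakly sequentially closed. -/
def WeaklySeqClosed {H : Type*} [NormedAddCommGroup H] [InnerProductSpace ℝ H]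
    (C : Set H) : Prop :=
  ∀ (x : ℕ → H) (l : H), (∀ n, x n ∈ C) → WeaklyConv x l → l ∈ C

/-- An operator `F` with domain `D` is weakly closed: if `x n ⇀ l` and `F (x n) ⇀ w`
then `l ∈ D` and `F l = w`. -/
def WeaklyClosedMap {X Y : Type*} [NormedAddCommGroup X] [InnerProductSpace ℝ X]
    [NormedAddCommGroup Y] [InnerProductSpace ℝ Y] (F : X → Y) (D : Set X) : Prop :=
  ∀ (x : ℕ → X) (l : X) (w : Y), (∀ n, x n ∈ D) → WeaklyConv x l →
    WeaklyConv (fun n => F (x n)) w → l ∈ D ∧ F l = w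

/-- `u` is an `x*`-minimum norm solution of `F z = y` subject to `z ∈ C ∩ D`. -/
def MinNormSol {X Y : Type*} [NormedAddCommGroup X] [InnerProductSpace ℝ X]
    [NormedAddCommGroup Y] [InnerProductSpace ℝ Y]
    (F : X → Y) (D C : Set X) (y : Y) (xs : X) (u : X) : Prop :=
  u ∈ C ∩ D ∧ F u = y ∧ ∀ z ∈ C ∩ D, F z = y → ‖u - xs‖ ≤ ‖z - xs‖

theorem tendsto_zero_of_tendsto_sq_norm {ι E : Type*} [SeminormedAddGroup E] {l : Filter ι}
    {f : ι → E} (h : Tendsto (fun i => ‖f i‖ ^ 2) l (𝓝 0)) : Tendsto f l (𝓝 0) := by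
  rw [tendsto_zero_iff_norm_tendsto_zero]
  simpa [Real.sqrt_sq_eq_abs] using h.sqrt

namespace WeaklyConv

variable {H : Type*} [NormedAddCommGroup H] [InnerProductSpace ℝ H] {x : ℕ → H} {l : H}

theorem of_tendsto (h : Tendsto x atTop (𝓝 l)) : WeaklyConv x l :=
  fun _ => h.inner tendsto_const_nhds

theorem sub_const (h : WeaklyConv x l) (c : H) : WeaklyConv (fun n => x n - c) (l - c) :=
  fun z => by simpa only [inner_sub_left] using (h z).sub_const (inner ℝ c z)

theorem sq_norm_le_of_sq_norm_le {u : ℕ → ℝ} {c : ℝ} (h : WeaklyConv x l)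
    (hxu : ∀ n, ‖x n‖ ^ 2 ≤ u n) (hu : Tendsto u atTop (𝓝 c)) : ‖l‖ ^ 2 ≤ c := by
  have : 2 * inner ℝ l l ≤ c + ‖l‖ ^ 2 :=
    le_of_tendsto_of_tendsto' ((h l).const_mul 2) (hu.add_const _) fun n => by
      nlinarith [real_inner_le_norm (x n) l, two_mul_le_add_sq ‖x n‖ ‖l‖, hxu n]
  rw [real_inner_self_eq_norm_sq] at this
  linarith

/-- The Radon–Riesz property of Hilbert spaces. -/
theorem tendsto_of_sq_norm_le {u : ℕ → ℝ} (h : WeaklyConv x l) (hxu : ∀ n, ‖x n‖ ^ 2 ≤ u n)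
    (hu : Tendsto u atTop (𝓝 (‖l‖ ^ 2))) : Tendsto x atTop (𝓝 l) := by
  have hbound : Tendsto (fun n => u n - 2 * inner ℝ (x n) l + ‖l‖ ^ 2) atTop (𝓝 0) := by
    convert (hu.sub ((h l).const_mul 2)).add_const (‖l‖ ^ 2) using 2
    rw [real_inner_self_eq_norm_sq]
    ring
  refine tendsto_sub_nhds_zero_iff.1 (tendsto_zero_of_tendsto_sq_norm ?_)
  refine squeeze_zero (fun n => sq_nonneg _) (fun n => ?_) hbound
  rw [norm_sub_sq_real]
  linarith [hxu n]

end WeaklyConv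

/-- Sequential Banach–Alaoglu, applied in the separable closed span of the sequence and
transported back by the Riesz representation. -/
theorem exists_strictMono_weaklyConv_of_bounded {H : Type*} [NormedAddCommGroup H]
    [InnerProductSpace ℝ H] [CompleteSpace H] {x : ℕ → H} {R : ℝ} (hR : ∀ n, ‖x n‖ ≤ R) :
    ∃ (φ : ℕ → ℕ) (l : H), StrictMono φ ∧ WeaklyConv (x ∘ φ) l := by
  set K := (Submodule.span ℝ (Set.range x)).topologicalClosure
  have hxK : ∀ n, x n ∈ K := fun n =>
    Submodule.le_topologicalClosure _ (Submodule.subset_span (Set.mem_range_self n))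
  have : CompleteSpace K :=
    (Submodule.span ℝ (Set.range x)).isClosed_topologicalClosure.completeSpace_coe
  have : TopologicalSpace.SeparableSpace K := by
    refine TopologicalSpace.IsSeparable.separableSpace ?_
    rw [Submodule.topologicalClosure_coe]
    exact ((Set.countable_range x).isSeparable.span (R := ℝ)).closure
  set f : ℕ → WeakDual ℝ K := fun n =>
    StrongDual.toWeakDual (InnerProductSpace.toDual ℝ K ⟨x n, hxK n⟩)
  have hf : ∀ n, f n ∈ WeakDual.toStrongDual ⁻¹' Metric.closedBall 0 R := fun n => by
    change dist (InnerProductSpace.toDual ℝ K ⟨x n, hxK n⟩) 0 ≤ R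
    rw [dist_zero_right, LinearIsometryEquiv.norm_map]
    exact hR n
  obtain ⟨g, -, φ, hφ, hg⟩ := WeakDual.isSeqCompact_closedBall ℝ K 0 R hf
  refine ⟨φ, ((InnerProductSpace.toDual ℝ K).symm (WeakDual.toStrongDual g) : H), hφ, fun w => ?_⟩
  have inner_eq : ∀ u ∈ K, inner ℝ u w = inner ℝ u (K.starProjection w) := fun u hu => by
    rw [← Submodule.inner_starProjection_left_eq_right, Submodule.starProjection_eq_self_iff.2 hu]
  rw [inner_eq _ (Submodule.coe_mem _)]
  convert ((WeakDual.eval_continuous (K.orthogonalProjectionOnto w)).tendsto g).comp hg using 1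
  · ext n
    simp [f, inner_eq _ (hxK _)]
  · exact congrArg 𝓝 (InnerProductSpace.toDual_symm_apply (E := K) (𝕜 := ℝ))

section MinNormSol

variable {X Y : Type*} [NormedAddCommGroup X] [InnerProductSpace ℝ X]
  [NormedAddCommGroup Y] [InnerProductSpace ℝ Y]
  {F : X → Y} {D C : Set X} {y : Y} {xs xdag : X}

theorem MinNormSol.of_sq_norm_le {u : X} (hdag : MinNormSol F D C y xs xdag)
    (hu : u ∈ C ∩ D) (hFu : F u = y) (hle : ‖u - xs‖ ^ 2 ≤ ‖xdag - xs‖ ^ 2) :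
    MinNormSol F D C y xs u :=
  ⟨hu, hFu, fun z hz hFz =>
    ((pow_le_pow_iff_left₀ (norm_nonneg _) (norm_nonneg _) two_ne_zero).1 hle).trans
      (hdag.2.2 z hz hFz)⟩

theorem tendsto_of_forall_minNormSol_eq [CompleteSpace X]
    (hF : WeaklyClosedMap F D) (hC : WeaklySeqClosed C) (hdag : MinNormSol F D C y xs xdag)
    (huniq : ∀ u, MinNormSol F D C y xs u → u = xdag) {x : ℕ → X} {u : ℕ → ℝ}
    (hxCD : ∀ n, x n ∈ C ∩ D) (hFx : Tendsto (fun n => F (x n)) atTop (𝓝 y))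
    (hxu : ∀ n, ‖x n - xs‖ ^ 2 ≤ u n) (hu : Tendsto u atTop (𝓝 (‖xdag - xs‖ ^ 2))) :
    Tendsto x atTop (𝓝 xdag) := by
  obtain ⟨M, hM⟩ := hu.bddAbove_range
  have hxM : ∀ n, ‖x n‖ ≤ √M + ‖xs‖ := fun n =>
    (norm_le_norm_sub_add _ xs).trans <| add_le_add_left
      (Real.le_sqrt_of_sq_le ((hxu n).trans (hM (Set.mem_range_self n)))) _
  refine tendsto_of_subseq_tendsto fun ns hns => ?_
  obtain ⟨φ, l, hφ, hl⟩ := exists_strictMono_weaklyConv_of_bounded fun n => hxM (ns n)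
  have hnsφ : Tendsto (ns ∘ φ) atTop atTop := hns.comp hφ.tendsto_atTop
  obtain ⟨hlD, hFl⟩ := hF _ l y (fun n => (hxCD _).2) hl (.of_tendsto (hFx.comp hnsφ))
  have hlC : l ∈ C := hC _ l (fun n => (hxCD _).1) hl
  have hls := hl.sub_const xs
  obtain rfl : l = xdag := huniq l <| hdag.of_sq_norm_le ⟨hlC, hlD⟩ hFl <|
    hls.sq_norm_le_of_sq_norm_le (fun _ => hxu _) (hu.comp hnsφ)
  refine ⟨φ, ?_⟩
  simpa using (hls.tendsto_of_sq_norm_le (fun _ => hxu _) (hu.comp hnsφ)).add_const xs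

end MinNormSol

theorem tendsto_of_tendsto_sq_norm_sub_div {ι E : Type*} [SeminormedAddCommGroup E]
    {l : Filter ι} {u : ι → E} {x₀ : E} {a : ι → ℝ} (ha : ∀ i, a i ≠ 0)
    (ha0 : Tendsto a l (𝓝 0)) (hua : Tendsto (fun i => ‖u i - x₀‖ ^ 2 / a i) l (𝓝 0)) :
    Tendsto u l (𝓝 x₀) := by
  refine tendsto_sub_nhds_zero_iff.1 (tendsto_zero_of_tendsto_sq_norm ?_)
  simpa [div_mul_cancel₀ _ (ha _)] using hua.mul ha0

theorem HasFDerivWithinAt.tendsto_sq_norm_sub_div {𝕜 ι E G : Type*} [NontriviallyNormedField 𝕜]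
    [NormedAddCommGroup E] [NormedSpace 𝕜 E] [NormedAddCommGroup G] [NormedSpace 𝕜 G]
    {F : E → G} {F' : E →L[𝕜] G} {D : Set E} {x₀ : E} {l : Filter ι} {u : ι → E} {a : ι → ℝ}
    (hF : HasFDerivWithinAt F F' D x₀) (hu : Tendsto u l (𝓝[D] x₀))
    (hua : Tendsto (fun i => ‖u i - x₀‖ ^ 2 / a i) l (𝓝 0)) :
    Tendsto (fun i => ‖F (u i) - F x₀‖ ^ 2 / a i) l (𝓝 0) := by
  have hO : (fun i => F (u i) - F x₀) =O[l] (fun i => u i - x₀) :=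
    hF.isBigO_sub.comp_tendsto hu
  simp only [div_eq_mul_inv] at hua ⊢
  exact ((hO.norm_norm.pow 2).mul (Asymptotics.isBigO_refl (fun i => (a i)⁻¹) l)).trans_tendsto
    hua

theorem tendsto_add_sq_div {ι : Type*} {l : Filter ι} {η δ a : ι → ℝ} (ha : ∀ i, 0 ≤ a i)
    (hη : Tendsto (fun i => η i ^ 2 / a i) l (𝓝 0))
    (hδ : Tendsto (fun i => δ i ^ 2 / a i) l (𝓝 0)) :
    Tendsto (fun i => (η i + δ i) ^ 2 / a i) l (𝓝 0) := by
  refine squeeze_zero (fun i => div_nonneg (sq_nonneg _) (ha i)) (fun i => ?_)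
    (by simpa using (hη.add hδ).const_mul 2)
  rw [← add_div, ← mul_div_assoc]
  exact div_le_div_of_nonneg_right (by nlinarith [sq_nonneg (η i - δ i)]) (ha i)

section Tikhonov

variable {X Y : Type*} [NormedAddCommGroup X] [NormedAddCommGroup Y]

def tikhonovFunctional (F : X → Y) (a : ℝ) (xs : X) (yδ : Y) (z : X) : ℝ :=
  ‖F z - yδ‖ ^ 2 + a * ‖z - xs‖ ^ 2

theorem IsMinOn.tikhonovFunctional_bounds {F : X → Y} {K : Set X} {a δ : ℝ} {xs z x : X}
    {y yδ : Y} (hmin : IsMinOn (tikhonovFunctional F a xs yδ) K x) (ha : 0 < a)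
    (hyδ : ‖yδ - y‖ ≤ δ) (hz : z ∈ K) :
    ‖F x - yδ‖ ^ 2 ≤ a * ((‖F z - y‖ + δ) ^ 2 / a + ‖z - xs‖ ^ 2) ∧
      ‖x - xs‖ ^ 2 ≤ (‖F z - y‖ + δ) ^ 2 / a + ‖z - xs‖ ^ 2 := by
  have hxz : tikhonovFunctional F a xs yδ x ≤ tikhonovFunctional F a xs yδ z := hmin hz
  have hres : ‖F z - yδ‖ ^ 2 ≤ (‖F z - y‖ + δ) ^ 2 := by
    refine pow_le_pow_left₀ (norm_nonneg _) ?_ 2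
    calc ‖F z - yδ‖ ≤ ‖F z - y‖ + ‖y - yδ‖ := norm_sub_le_norm_sub_add_norm_sub _ _ _
      _ ≤ ‖F z - y‖ + δ := by rw [norm_sub_rev y]; gcongr
  have hexpand : a * ((‖F z - y‖ + δ) ^ 2 / a + ‖z - xs‖ ^ 2) =
      (‖F z - y‖ + δ) ^ 2 + a * ‖z - xs‖ ^ 2 := by
    field_simp
  unfold tikhonovFunctional at hxz
  refine ⟨by nlinarith [sq_nonneg ‖x - xs‖], le_of_mul_le_mul_left ?_ ha⟩
  nlinarith [sq_nonneg ‖F x - yδ‖]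

theorem tendsto_of_isMinOn_tikhonovFunctional [InnerProductSpace ℝ X] [CompleteSpace X]
    [InnerProductSpace ℝ Y] {F : X → Y} {D C : Set X}
    {y : Y} {xs xdag : X} {F' : X →L[ℝ] Y}
    (hF : WeaklyClosedMap F D) (hC : WeaklySeqClosed C) (hF' : HasFDerivWithinAt F F' D xdag)
    (hdag : MinNormSol F D C y xs xdag) (huniq : ∀ u, MinNormSol F D C y xs u → u = xdag)
    {K : ℕ → Set X} (hK : ∀ k, K k ⊆ C ∩ D) {a δ : ℕ → ℝ} (ha : ∀ k, 0 < a k)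
    (ha0 : Tendsto a atTop (𝓝 0)) (hδ0 : Tendsto δ atTop (𝓝 0))
    (hδa : Tendsto (fun k => δ k ^ 2 / a k) atTop (𝓝 0))
    {yδ : ℕ → Y} (hyδ : ∀ k, ‖yδ k - y‖ ≤ δ k)
    {z : ℕ → X} (hzK : ∀ k, z k ∈ K k)
    (hza : Tendsto (fun k => ‖z k - xdag‖ ^ 2 / a k) atTop (𝓝 0))
    {x : ℕ → X} (hxK : ∀ k, x k ∈ K k)
    (hx : ∀ k, IsMinOn (tikhonovFunctional F (a k) xs (yδ k)) (K k) (x k)) :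
    Tendsto x atTop (𝓝 xdag) := by
  have hz : Tendsto z atTop (𝓝 xdag) :=
    tendsto_of_tendsto_sq_norm_sub_div (fun k => (ha k).ne') ha0 hza
  have hFz : Tendsto (fun k => ‖F (z k) - y‖ ^ 2 / a k) atTop (𝓝 0) := by
    simpa only [hdag.2.1] using hF'.tendsto_sq_norm_sub_div
      (tendsto_nhdsWithin_iff.2 ⟨hz, .of_forall fun k => (hK k (hzK k)).2⟩) hza
  set B := fun k => (‖F (z k) - y‖ + δ k) ^ 2 / a k + ‖z k - xs‖ ^ 2
  have hB : Tendsto B atTop (𝓝 (‖xdag - xs‖ ^ 2)) := by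
    simpa using (tendsto_add_sq_div (fun k => (ha k).le) hFz hδa).add
      ((hz.sub_const xs).norm.pow 2)
  have hbounds := fun k => (hx k).tikhonovFunctional_bounds (ha k) (hyδ k) (hzK k)
  have hres : Tendsto (fun k => F (x k) - yδ k) atTop (𝓝 0) := by
    refine tendsto_zero_of_tendsto_sq_norm <|
      squeeze_zero (fun k => sq_nonneg _) (fun k => (hbounds k).1) ?_
    simpa using ha0.mul hB
  have hyδy : Tendsto yδ atTop (𝓝 y) :=
    tendsto_iff_norm_sub_tendsto_zero.2 (squeeze_zero (fun _ => norm_nonneg _) hyδ hδ0)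
  refine tendsto_of_forall_minNormSol_eq hF hC hdag huniq (fun k => hK k (hxK k)) ?_
    (fun k => (hbounds k).2) hB
  simpa using hres.add hyδy

end Tikhonov

theorem tikhonov_compact_sets_full_convergence_of_unique_general
    {X Y : Type*} [NormedAddCommGroup X] [InnerProductSpace ℝ X] [CompleteSpace X]
    [NormedAddCommGroup Y] [InnerProductSpace ℝ Y]
    (F : X → Y) (D C : Set X) (y : Y) (xs : X)
    (hF : WeaklyClosedMap F D) (hC : WeaklySeqClosed C)
    (Fd : X → X →L[ℝ] Y) (hFd : ∀ z ∈ D, HasFDerivWithinAt F (Fd z) D z)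
    (xdag : X) (hdag : MinNormSol F D C y xs xdag)
    (huniq : ∀ u, MinNormSol F D C y xs u → u = xdag)
    (Xm : ℕ → Set X) (hXsub : ∀ m, Xm m ⊆ C ∩ D)
    (α : ℝ → ℝ) (hαpos : ∀ δ > (0:ℝ), 0 < α δ)
    (hα1 : Tendsto α (nhdsWithin 0 (Set.Ioi 0)) (nhds 0))
    (hα2 : Tendsto (fun δ => δ ^ 2 / α δ) (nhdsWithin 0 (Set.Ioi 0)) (nhds 0))
    (mft : ℝ → ℕ)
    (xapx : ℝ → X) (hapx : ∀ δ > (0:ℝ), xapx δ ∈ Xm (mft δ))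
    (hapx0 : Tendsto (fun δ => ‖xdag - xapx δ‖ ^ 2 / α δ) (nhdsWithin 0 (Set.Ioi 0)) (nhds 0)) :
    ∀ (δk : ℕ → ℝ), (∀ k, 0 < δk k) → Tendsto δk atTop (nhds 0) →
    ∀ (yd : ℕ → Y), (∀ k, ‖yd k - y‖ ≤ δk k) →
    ∀ (xk : ℕ → X),
      (∀ k, xk k ∈ Xm (mft (δk k)) ∧ ∀ z ∈ Xm (mft (δk k)),
        ‖F (xk k) - yd k‖ ^ 2 + α (δk k) * ‖xk k - xs‖ ^ 2 ≤
          ‖F z - yd k‖ ^ 2 + α (δk k) * ‖z - xs‖ ^ 2) →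
      Tendsto xk atTop (nhds xdag) := by
  intro δk hδpos hδ0 yd hyd xk hxk
  have hδ : Tendsto δk atTop (𝓝[>] 0) := tendsto_nhdsWithin_iff.2 ⟨hδ0, .of_forall hδpos⟩
  exact tendsto_of_isMinOn_tikhonovFunctional hF hC (hFd xdag hdag.1.2) hdag huniq
    (fun k => hXsub (mft (δk k))) (fun k => hαpos _ (hδpos k)) (hα1.comp hδ) hδ0 (hα2.comp hδ)
    hyd (fun k => hapx _ (hδpos k))
    (by simpa only [Function.comp_def, norm_sub_rev xdag] using hapx0.comp hδ)
    (fun k => (hxk k).1) (fun k => isMinOn_iff.2 (hxk k).2)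

/-- If the `x*`-minimum norm solution is unique, then the whole family of regularized
solutions converges strongly to it under the parameter choice rules. -/
theorem tikhonov_compact_sets_full_convergence_of_unique
    {X Y : Type*} [NormedAddCommGroup X] [InnerProductSpace ℝ X] [CompleteSpace X]
    [NormedAddCommGroup Y] [InnerProductSpace ℝ Y] [CompleteSpace Y]
    (F : X → Y) (D C : Set X) (y : Y) (xs : X)
    (hFc : ContinuousOn F D) (hF : WeaklyClosedMap F D) (hC : WeaklySeqClosed C)
    (Fd : X → X →L[ℝ] Y) (hFd : ∀ z ∈ D, HasFDerivWithinAt F (Fd z) D z)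
    (xdag : X) (hdag : MinNormSol F D C y xs xdag)
    (huniq : ∀ u, MinNormSol F D C y xs u → u = xdag)
    (Xm : ℕ → Set X) (hXc : ∀ m, IsCompact (Xm m)) (hXsub : ∀ m, Xm m ⊆ C ∩ D)
    (hXdense : C ∩ D ⊆ closure (⋃ m, Xm m))
    (α : ℝ → ℝ) (hαpos : ∀ δ > (0:ℝ), 0 < α δ)
    (hα1 : Tendsto α (nhdsWithin 0 (Set.Ioi 0)) (nhds 0))
    (hα2 : Tendsto (fun δ => δ ^ 2 / α δ) (nhdsWithin 0 (Set.Ioi 0)) (nhds 0))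
    (mft : ℝ → ℕ) (hm : Tendsto mft (nhdsWithin 0 (Set.Ioi 0)) atTop)
    (xapx : ℝ → X) (hapx : ∀ δ > (0:ℝ), xapx δ ∈ Xm (mft δ))
    (hapx0 : Tendsto (fun δ => ‖xdag - xapx δ‖ ^ 2 / α δ) (nhdsWithin 0 (Set.Ioi 0)) (nhds 0)) :
    ∀ (δk : ℕ → ℝ), (∀ k, 0 < δk k) → Tendsto δk atTop (nhds 0) →
    ∀ (yd : ℕ → Y), (∀ k, ‖yd k - y‖ ≤ δk k) →
    ∀ (xk : ℕ → X),
      (∀ k, xk k ∈ Xm (mft (δk k)) ∧ ∀ z ∈ Xm (mft (δk k)),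
        ‖F (xk k) - yd k‖ ^ 2 + α (δk k) * ‖xk k - xs‖ ^ 2 ≤
          ‖F z - yd k‖ ^ 2 + α (δk k) * ‖z - xs‖ ^ 2) →
      Tendsto xk atTop (nhds xdag) :=
  tikhonov_compact_sets_full_convergence_of_unique_general F D C y xs hF hC Fd hFd xdag hdag huniq
    Xm hXsub α hαpos hα1 hα2 mft xapx hapx hapx0
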